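/- Let G be a graph with a k-matching assignment M in which all edges are full, and let H be a subgraph of G such that M is consistent on every cycle of H. Then one can rename the lists L(u) for u ∈ V(H) to obtain a k-matching assignment M' for G such that all edges of H are straight in M'. -/
import Mathlib


open SimpleGraph

/-- A matching assignment for `G` with lists `L`: for each edge `uv` a matching
between the fibers `{u} × L u` and `{v} × L v`. -/
structure MatchingAssignment {V : Type*} (G : SimpleGraph V) (L : V → Finset ℕ) where
  rel : V → ℕ → V → ℕ → Prop
  adj_of_rel : ∀ {u c v c'}, rel u c v c' → G.Adj u v
  mem_left : ∀ {u c v c'}, rel u c v c' → c ∈ L u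
  mem_right : ∀ {u c v c'}, rel u c v c' → c' ∈ L v
  symm : ∀ {u c v c'}, rel u c v c' → rel v c' u c
  right_unique : ∀ {u c v c' c''}, rel u c v c' → rel u c v c'' → c' = c''
  left_unique : ∀ {u c c' v c''}, rel u c v c'' → rel u c' v c'' → c = c'

/-- An `M`-coloring: a choice of one color from each fiber forming an independent
set in the cover graph. -/
def IsMColoring {V : Type*} {G : SimpleGraph V} {L : V → Finset ℕ}
    (M : MatchingAssignment G L) (f : V → ℕ) : Prop :=
  (∀ v, f v ∈ L v) ∧ ∀ u v, ¬ M.rel u (f u) v (f v)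

/-- `G` is DP-`k`-colorable. -/
def DPColorable {V : Type*} (G : SimpleGraph V) (k : ℕ) : Prop :=
  ∀ L : V → Finset ℕ, (∀ v, (L v).card = k) →
    ∀ M : MatchingAssignment G L, ∃ f, IsMColoring M f

/-- The DP-chromatic number of `G`. -/
noncomputable def dpChromaticNumber {V : Type*} (G : SimpleGraph V) : ℕ :=
  sInf {k | DPColorable G k}

section Aux

variable {V : Type*} {G : SimpleGraph V} {k : ℕ}
  (M : MatchingAssignment G (fun _ => Finset.range k)) (H : G.Subgraph)

/-- The step relation on the cover of `H`. -/
def Rp (p q : V × ℕ) : Prop := H.Adj p.1 q.1 ∧ M.rel p.1 p.2 q.1 q.2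

lemma Rp.symm' {p q} (h : Rp M H p q) : Rp M H q p := ⟨h.1.symm, M.symm h.2⟩

lemma rt_symm {p q} (h : Relation.ReflTransGen (Rp M H) p q) :
    Relation.ReflTransGen (Rp M H) q p := by
  induction h with
  | refl => exact .refl
  | tail _ hbc ih => exact .head (Rp.symm' M H hbc) ih

lemma exists_walk {p q} (h : Relation.ReflTransGen (Rp M H) p q) :
    ∃ (m : ℕ) (w : ℕ → V) (c : ℕ → ℕ), w 0 = p.1 ∧ c 0 = p.2 ∧ w m = q.1 ∧ c m = q.2 ∧
      ∀ i, i < m → Rp M H (w i, c i) (w (i+1), c (i+1)) := by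
  induction h with
  | refl => exact ⟨0, fun _ => p.1, fun _ => p.2, rfl, rfl, rfl, rfl, by omega⟩
  | @tail b q' _ hbc ih =>
    obtain ⟨m, w, c, hw0, hc0, hwm, hcm, hstep⟩ := ih
    refine ⟨m + 1, fun n => if n ≤ m then w n else q'.1, fun n => if n ≤ m then c n else q'.2,
      ?_, ?_, ?_, ?_, ?_⟩
    · simpa using hw0
    · simpa using hc0
    · simp
    · simp
    · intro i hi
      rcases Nat.lt_or_ge i m with h' | h'
      · simpa [Nat.le_of_lt h', Nat.succ_le_of_lt h'] using hstep i h'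
      · have him : i = m := by omega
        have h2 : ¬ (m + 1 ≤ m) := by omega
        have hb : (w m, c m) = b := by rw [hwm, hcm]
        simp only [him, le_refl, if_pos, h2, if_neg, not_false_iff]
        rw [hb]
        exact hbc

lemma key_walk
    (hcons : ∀ n : ℕ, 3 ≤ n → ∀ w : Fin (n + 1) → V, w 0 = w (Fin.last n) →
      (Function.Injective fun i : Fin n => w i.castSucc) →
      (∀ i : Fin n, H.Adj (w i.castSucc) (w i.succ)) →
      ∀ c : Fin (n + 1) → ℕ,
        (∀ i : Fin n, M.rel (w i.castSucc) (c i.castSucc) (w i.succ) (c i.succ)) →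
        c 0 = c (Fin.last n)) :
    ∀ m (w : ℕ → V) (c : ℕ → ℕ),
      (∀ i, i < m → Rp M H (w i, c i) (w (i+1), c (i+1))) → w 0 = w m → c 0 = c m := by
  intro m
  induction m using Nat.strong_induction_on with
  | _ m IH =>
  intro w c hstep hclosed
  by_cases hrep : ∃ i j, i < j ∧ j ≤ m ∧ (i ≠ 0 ∨ j ≠ m) ∧ w i = w j
  · obtain ⟨i, j, hij, hjm, hne, hw⟩ := hrep
    have hd : j - i < m := by omega
    have he : i + (j - i) = j := by omega
    have h1 : c i = c j := by
      have := IH (j - i) hd (fun n => w (i + n)) (fun n => c (i + n))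
        (fun n hn => hstep (i + n) (by omega))
        (by show w (i + 0) = w (i + (j - i)); rw [he]; exact hw)
      simpa [he] using this
    set d := j - i with hdd
    have hid : i + d = j := by omega
    have h2 := IH (m - d) (by omega)
      (fun n => if n ≤ i then w n else w (n + d))
      (fun n => if n ≤ i then c n else c (n + d)) ?_ ?_
    · rcases le_or_gt (m - d) i with hle | hlt
      · have hi0 : i = m - d := by omega
        have hj : j = m := by omega
        simpa [hi0.symm, hw, hj, h1] using h2
      · have : ¬ (m - d ≤ i) := by omega
        have hmd : m - d + d = m := by omega
        simpa [this, hmd] using h2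
    · intro n hn
      rcases Nat.lt_trichotomy n i with h' | h' | h'
      · have e1 : n ≤ i := by omega
        have e2 : n + 1 ≤ i := by omega
        simp only [if_pos e1, if_pos e2]
        exact hstep n (by omega)
      · subst h'
        have e2 : ¬ (n + 1 ≤ n) := by omega
        simp only [le_refl, if_pos, if_neg e2]
        have := hstep (n + d) (by omega)
        rw [hw, h1, hid] at *
        have e3 : n + 1 + d = j + 1 := by omega
        rw [e3]
        rw [← hid] at this
        convert this using 3
      · have e1 : ¬ (n ≤ i) := by omega
        have e2 : ¬ (n + 1 ≤ i) := by omega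
        simp only [if_neg e1, if_neg e2]
        have e3 : n + 1 + d = n + d + 1 := by omega
        rw [e3]
        exact hstep (n + d) (by omega)
    · rcases le_or_gt (m - d) i with hle | hlt
      · have hi0 : i = m - d := by omega
        have hj : j = m := by omega
        simp only [Nat.zero_le, if_pos, if_pos (le_of_eq hi0.symm)]
        rw [← hi0, hw, hj, ← hclosed]
      · have hns : ¬ (m - d ≤ i) := by omega
        have hmd : m - d + d = m := by omega
        simp only [Nat.zero_le, if_pos, if_neg hns, hmd]
        exact hclosed
  · push_neg at hrep
    match m with
    | 0 => rfl
    | 1 =>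
      have := (hstep 0 (by omega)).1
      rw [hclosed] at this
      exact absurd (H.adj_sub this) (G.irrefl)
    | 2 =>
      have s0 : M.rel (w 0) (c 0) (w 1) (c 1) := (hstep 0 (by omega)).2
      have s1 : M.rel (w 1) (c 1) (w 2) (c 2) := (hstep 1 (by omega)).2
      have s0' := M.symm s0
      rw [hclosed] at s0'
      exact M.right_unique s0' s1
    | (n + 3) =>
      have := hcons (n + 3) (by omega) (fun i => w i.val)
        (by simpa [Fin.last] using hclosed)
        (by
          intro a b hab
          simp only [Fin.coe_castSucc] at hab
          by_contra hne
          rcases Nat.lt_trichotomy a.val b.val with h' | h' | h'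
          · exact hrep a.val b.val h' (by omega) (Or.inr (by omega)) hab
          · exact hne (Fin.ext h')
          · exact hrep b.val a.val h' (by omega) (Or.inr (by omega)) hab.symm)
        (by
          intro i
          have := (hstep i.val i.isLt).1
          simpa using this)
        (fun i => c i.val)
        (by
          intro i
          have := (hstep i.val i.isLt).2
          simpa using this)
      simpa [Fin.last] using this

lemma key (hcons : ∀ n : ℕ, 3 ≤ n → ∀ w : Fin (n + 1) → V, w 0 = w (Fin.last n) →
      (Function.Injective fun i : Fin n => w i.castSucc) →
      (∀ i : Fin n, H.Adj (w i.castSucc) (w i.succ)) →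
      ∀ c : Fin (n + 1) → ℕ,
        (∀ i : Fin n, M.rel (w i.castSucc) (c i.castSucc) (w i.succ) (c i.succ)) →
        c 0 = c (Fin.last n))
    {v : V} {a b : ℕ} (h : Relation.ReflTransGen (Rp M H) (v, a) (v, b)) : a = b := by
  obtain ⟨m, w, c, hw0, hc0, hwm, hcm, hstep⟩ := exists_walk M H h
  simp only at hw0 hc0 hwm hcm
  rw [← hc0, ← hcm]
  exact key_walk M H hcons m w c hstep (by rw [hw0, hwm])

lemma lift_walk (hfull : ∀ u v, G.Adj u v → ∀ c ∈ Finset.range k, ∃ c', M.rel u c v c')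
    {u v : V} (p : H.spanningCoe.Walk u v) :
    ∀ a, a < k → ∃ b, b < k ∧ Relation.ReflTransGen (Rp M H) (u, a) (v, b) := by
  induction p with
  | nil => exact fun a ha => ⟨a, ha, .refl⟩
  | @cons x y z hadj _ ih =>
    intro a ha
    have hH : H.Adj x y := by simpa using hadj
    obtain ⟨b, hb⟩ := hfull x y (H.adj_sub hH) a (Finset.mem_range.mpr ha)
    have hbk : b < k := Finset.mem_range.mp (M.mem_right hb)
    obtain ⟨b', hb'k, hrel⟩ := ih b hbk
    exact ⟨b', hb'k, .head ⟨hH, hb⟩ hrel⟩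

end Aux

/-- (Dvořák–Postle) If all edges of a `k`-matching assignment `M` are full and `M` is
consistent on every cycle of the subgraph `H`, then the lists of the vertices of `H` can be
renamed so that in the resulting `k`-matching assignment `M'` all edges of `H` are straight. -/
theorem statement_9 {V : Type*} [Fintype V] (G : SimpleGraph V) (k : ℕ)
    (M : MatchingAssignment G (fun _ => Finset.range k))
    (hfull : ∀ u v, G.Adj u v → ∀ c ∈ Finset.range k, ∃ c', M.rel u c v c')
    (H : G.Subgraph)
    (hcons : ∀ n : ℕ, 3 ≤ n → ∀ w : Fin (n + 1) → V, w 0 = w (Fin.last n) →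
      (Function.Injective fun i : Fin n => w i.castSucc) →
      (∀ i : Fin n, H.Adj (w i.castSucc) (w i.succ)) →
      ∀ c : Fin (n + 1) → ℕ,
        (∀ i : Fin n, M.rel (w i.castSucc) (c i.castSucc) (w i.succ) (c i.succ)) →
        c 0 = c (Fin.last n)) :
    ∃ σ : V → Equiv.Perm ℕ,
      (∀ v, v ∉ H.verts → σ v = Equiv.refl ℕ) ∧
      (∀ v, ∀ c ∈ Finset.range k, σ v c ∈ Finset.range k) ∧
      ∃ M' : MatchingAssignment G (fun _ => Finset.range k),
        (∀ u c v c', M'.rel u c v c' ↔ M.rel u ((σ u).symm c) v ((σ v).symm c')) ∧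
        (∀ u v, H.Adj u v → ∀ c c', M'.rel u c v c' → c = c') := by
  classical
  set r : V → V := fun v => (H.spanningCoe.connectedComponentMk v).out with hr
  have hreach : ∀ v, H.spanningCoe.Reachable (r v) v := fun v =>
    ConnectedComponent.eq.mp ((H.spanningCoe.connectedComponentMk v).out_eq)
  have hT : ∀ v a, a < k → ∃ b, b < k ∧ Relation.ReflTransGen (Rp M H) (r v, a) (v, b) := by
    intro v a ha
    obtain ⟨p⟩ := hreach v
    exact lift_walk M H hfull p a ha
  have hS : ∀ v b, b < k → ∃ a, a < k ∧ Relation.ReflTransGen (Rp M H) (v, b) (r v, a) := by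
    intro v b hb
    obtain ⟨p⟩ := (hreach v).symm
    exact lift_walk M H hfull p b hb
  have hkey : ∀ (v : V) (a b : ℕ),
      Relation.ReflTransGen (Rp M H) (v, a) (v, b) → a = b :=
    fun v a b h => key M H hcons h
  have hTx : ∀ v a, ∃ b,
      ((v ∈ H.verts ∧ a < k) → b < k ∧ Relation.ReflTransGen (Rp M H) (r v, a) (v, b)) ∧
      (¬ (v ∈ H.verts ∧ a < k) → b = a) := by
    intro v a
    by_cases h : v ∈ H.verts ∧ a < k
    · obtain ⟨b, hb, hrt⟩ := hT v a h.2
      exact ⟨b, fun _ => ⟨hb, hrt⟩, fun h' => absurd h h'⟩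
    · exact ⟨a, fun h' => absurd h' h, fun _ => rfl⟩
  have hSx : ∀ v b, ∃ a,
      ((v ∈ H.verts ∧ b < k) → a < k ∧ Relation.ReflTransGen (Rp M H) (v, b) (r v, a)) ∧
      (¬ (v ∈ H.verts ∧ b < k) → a = b) := by
    intro v b
    by_cases h : v ∈ H.verts ∧ b < k
    · obtain ⟨a, ha, hrt⟩ := hS v b h.2
      exact ⟨a, fun _ => ⟨ha, hrt⟩, fun h' => absurd h h'⟩
    · exact ⟨b, fun h' => absurd h' h, fun _ => rfl⟩
  choose tF htPos htNeg using hTx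
  choose sF hsPos hsNeg using hSx
  -- left inverse: tF (sF b) = b
  have hli : ∀ v, Function.LeftInverse (tF v) (sF v) := by
    intro v b
    by_cases h : v ∈ H.verts ∧ b < k
    · obtain ⟨ha, hrt⟩ := hsPos v b h
      obtain ⟨hb', hrt'⟩ := htPos v (sF v b) ⟨h.1, ha⟩
      exact (hkey v b _ (hrt.trans hrt')).symm
    · rw [hsNeg v b h, htNeg v b h]
  have hri : ∀ v, Function.RightInverse (tF v) (sF v) := by
    intro v a
    by_cases h : v ∈ H.verts ∧ a < k
    · obtain ⟨hb, hrt⟩ := htPos v a h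
      obtain ⟨ha', hrt'⟩ := hsPos v (tF v a) ⟨h.1, hb⟩
      exact (hkey (r v) a _ (hrt.trans hrt')).symm
    · rw [htNeg v a h, hsNeg v a h]
  refine ⟨fun v => ⟨sF v, tF v, hli v, hri v⟩, ?_, ?_, ?_⟩
  · intro v hv
    ext b
    exact hsNeg v b (fun h => hv h.1)
  · intro v c hc
    rw [Finset.mem_range] at hc ⊢
    by_cases hv : v ∈ H.verts
    · exact (hsPos v c ⟨hv, hc⟩).1
    · show sF v c < k
      rw [hsNeg v c (fun h => hv h.1)]; exact hc
  · refine ⟨⟨fun u c v c' => M.rel u (tF u c) v (tF v c'), ?_, ?_, ?_, ?_, ?_, ?_⟩,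
      fun u c v c' => Iff.rfl, ?_⟩
    · exact fun h => M.adj_of_rel h
    · intro u c v c' h
      have hm := M.mem_left h
      by_contra hc
      have hck : ¬ (u ∈ H.verts ∧ c < k) := by
        rw [Finset.mem_range] at hc
        exact fun h' => hc h'.2
      rw [htNeg u c hck] at hm
      exact hc hm
    · intro u c v c' h
      have hm := M.mem_right h
      by_contra hc
      have hck : ¬ (v ∈ H.verts ∧ c' < k) := by
        rw [Finset.mem_range] at hc
        exact fun h' => hc h'.2
      rw [htNeg v c' hck] at hm
      exact hc hm
    · exact fun h => M.symm h
    · intro u c v c' c'' h1 h2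
      have := M.right_unique h1 h2
      have hinj : Function.Injective (tF v) := (hri v).injective
      exact hinj this
    · intro u c c' v c'' h1 h2
      have := M.left_unique h1 h2
      have hinj : Function.Injective (tF u) := (hri u).injective
      exact hinj this
    · intro u v hH c c' h
      have hu : u ∈ H.verts := H.edge_vert hH
      have hv : v ∈ H.verts := H.edge_vert hH.symm
      have ha : tF u c < k := Finset.mem_range.mp (M.mem_left h)
      have hb : tF v c' < k := Finset.mem_range.mp (M.mem_right h)
      have hrr : r u = r v := by
        have hcc : H.spanningCoe.connectedComponentMk u = H.spanningCoe.connectedComponentMk v :=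
          ConnectedComponent.sound ((by simpa using hH : H.spanningCoe.Adj u v).reachable)
        rw [hr]
        simp only [hcc]
      obtain ⟨ha0, hrt0⟩ := hsPos u (tF u c) ⟨hu, ha⟩
      obtain ⟨hb0, hrt1⟩ := hsPos v (tF v c') ⟨hv, hb⟩
      rw [← hrr] at hrt1
      have step : Relation.ReflTransGen (Rp M H) (u, tF u c) (v, tF v c') :=
        Relation.ReflTransGen.single ⟨hH, h⟩
      have hrts : Relation.ReflTransGen (Rp M H)
          (r u, sF u (tF u c)) (r u, sF v (tF v c')) :=
        ((rt_symm M H hrt0).trans step).trans hrt1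
      calc c = sF u (tF u c) := (hri u c).symm
        _ = sF v (tF v c') := hkey (r u) _ _ hrts
        _ = c' := hri v c'
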